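/- arXiv:1912.11632 — 2 statements merged into one kernel-verified Lean document; each statement's English description precedes it below -/
import Mathlib

section
/- Let f be convex differentiable with L_f-Lipschitz gradient and g be convex. Then for any points x̃ and x^k and any L ≥ 0, the minimizer x⁺ of the composite model x ↦ ⟨∇f(x̃), x − x̃⟩ + (L_f/2)‖x − x̃‖₂² + g(x) + (L/2)‖x − x^k‖₂² satisfies f(x⁺) + g(x⁺) + (L/2)‖x⁺ − x^k‖₂² ≤ f(x) + g(x) + (L/2)‖x − x^k‖₂² + (L_f/2)‖x − x̃‖₂² for all x. -/
/-!
Add three inequalities: the descent lemma bounds `f xplus` by the linear model at `xt` plus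
`Lf / 2 * ‖xplus - xt‖ ^ 2`; minimality of `xplus` compares the model at `xplus` and at `x`;
convexity bounds the linear model at `x` by `f x`.
-/

open RealInnerProductSpace Set AffineMap

variable {E : Type*} [NormedAddCommGroup E] [InnerProductSpace ℝ E] [CompleteSpace E]
  {f : E → ℝ} {f' a b : E}

theorem HasGradientAt.hasDerivAt_comp_lineMap {t : ℝ} (h : HasGradientAt f f' (lineMap a b t)) :
    HasDerivAt (f ∘ lineMap a b) ⟪f', b - a⟫ t := by
  simpa using h.hasFDerivAt.comp_hasDerivAt t hasDerivAt_lineMap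

theorem ConvexOn.add_inner_gradient_le {s : Set E} (hf : ConvexOn ℝ s f) (ha : a ∈ s) (hb : b ∈ s)
    (hfa : DifferentiableAt ℝ f a) : f a + ⟪gradient f a, b - a⟫ ≤ f b := by
  have hline : ConvexOn ℝ (lineMap a b ⁻¹' s) (f ∘ lineMap (k := ℝ) a b) := hf.comp_affineMap _
  have hderiv : HasDerivAt (f ∘ lineMap a b) ⟪gradient f a, b - a⟫ (0 : ℝ) :=
    HasGradientAt.hasDerivAt_comp_lineMap (by rw [lineMap_apply_zero]; exact hfa.hasGradientAt)
  have hslope := hline.le_slope_of_hasDerivAt (by simpa using ha) (by simpa using hb) one_pos hderiv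
  simp only [slope_def_field, Function.comp_apply, lineMap_apply_zero, lineMap_apply_one] at hslope
  linarith

theorem le_add_inner_gradient_add_sq_norm_of_lipschitz_gradient (hfd : Differentiable ℝ f) {Lf : ℝ}
    (hfL : ∀ x y, ‖gradient f x - gradient f y‖ ≤ Lf * ‖x - y‖) (a b : E) :
    f b ≤ f a + ⟪gradient f a, b - a⟫ + Lf / 2 * ‖b - a‖ ^ 2 := by
  -- `ψ` is antitone on `[0, 1]`, and `ψ 1 ≤ ψ 0` is the claim.
  set ψ : ℝ → ℝ := fun s =>
    f (lineMap a b s) - s * ⟪gradient f a, b - a⟫ - Lf / 2 * ‖b - a‖ ^ 2 * s ^ 2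
  have hψ : ∀ s, HasDerivAt ψ
      (⟪gradient f (lineMap a b s) - gradient f a, b - a⟫ - Lf * ‖b - a‖ ^ 2 * s) s := fun s =>
    ((((hfd _).hasGradientAt.hasDerivAt_comp_lineMap).sub
      ((hasDerivAt_id s).mul_const ⟪gradient f a, b - a⟫)).sub
      ((hasDerivAt_pow 2 s).const_mul (Lf / 2 * ‖b - a‖ ^ 2))).congr_deriv
      (by simp only [inner_sub_left]; ring)
  have hψ' : ∀ s ∈ interior (Icc (0 : ℝ) 1),
      ⟪gradient f (lineMap a b s) - gradient f a, b - a⟫ - Lf * ‖b - a‖ ^ 2 * s ≤ 0 := by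
    intro s hs
    rw [interior_Icc] at hs
    refine sub_nonpos.2 ?_
    calc ⟪gradient f (lineMap a b s) - gradient f a, b - a⟫
        ≤ ‖gradient f (lineMap a b s) - gradient f a‖ * ‖b - a‖ := real_inner_le_norm _ _
      _ ≤ Lf * ‖lineMap a b s - a‖ * ‖b - a‖ := by gcongr; exact hfL _ _
      _ = Lf * ‖b - a‖ ^ 2 * s := by
        rw [lineMap_apply_module', add_sub_cancel_right, norm_smul, Real.norm_of_nonneg hs.1.le]
        ring
  have hψ10 := antitoneOn_of_hasDerivWithinAt_nonpos (convex_Icc 0 1)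
    (fun s _ => (hψ s).continuousAt.continuousWithinAt) (fun s _ => (hψ s).hasDerivWithinAt) hψ'
    (left_mem_Icc.2 zero_le_one) (right_mem_Icc.2 zero_le_one) zero_le_one
  simp only [ψ, lineMap_apply_zero, lineMap_apply_one] at hψ10
  linarith

theorem composite_model_step_general {n : ℕ}
    (f g : EuclideanSpace ℝ (Fin n) → ℝ) (Lf L : ℝ)
    (hf : ConvexOn ℝ Set.univ f) (hfd : Differentiable ℝ f)
    (hfL : ∀ x y, ‖gradient f x - gradient f y‖ ≤ Lf * ‖x - y‖)
    (xt xk xplus : EuclideanSpace ℝ (Fin n))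
    (hmin : ∀ x,
      ⟪gradient f xt, xplus - xt⟫ + Lf / 2 * ‖xplus - xt‖ ^ 2 + g xplus +
          L / 2 * ‖xplus - xk‖ ^ 2 ≤
        ⟪gradient f xt, x - xt⟫ + Lf / 2 * ‖x - xt‖ ^ 2 + g x + L / 2 * ‖x - xk‖ ^ 2) :
    ∀ x, f xplus + g xplus + L / 2 * ‖xplus - xk‖ ^ 2 ≤
      f x + g x + L / 2 * ‖x - xk‖ ^ 2 + Lf / 2 * ‖x - xt‖ ^ 2 := by
  intro x
  have upper := le_add_inner_gradient_add_sq_norm_of_lipschitz_gradient hfd hfL xt xplus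
  have lower := hf.add_inner_gradient_le (mem_univ xt) (mem_univ x) (hfd xt)
  linarith [hmin x]

/-- Minimizing the composite model (3) decreases the Catalyst objective (2). -/
theorem composite_model_step {n : ℕ}
    (f g : EuclideanSpace ℝ (Fin n) → ℝ) (Lf L : ℝ) (hL : 0 ≤ L)
    (hf : ConvexOn ℝ Set.univ f) (hfd : Differentiable ℝ f)
    (hfL : ∀ x y, ‖gradient f x - gradient f y‖ ≤ Lf * ‖x - y‖)
    (hg : ConvexOn ℝ Set.univ g)
    (xt xk xplus : EuclideanSpace ℝ (Fin n))
    (hmin : ∀ x,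
      ⟪gradient f xt, xplus - xt⟫ + Lf / 2 * ‖xplus - xt‖ ^ 2 + g xplus +
          L / 2 * ‖xplus - xk‖ ^ 2 ≤
        ⟪gradient f xt, x - xt⟫ + Lf / 2 * ‖x - xt‖ ^ 2 + g x + L / 2 * ‖x - xk‖ ^ 2) :
    ∀ x, f xplus + g xplus + L / 2 * ‖xplus - xk‖ ^ 2 ≤
      f x + g x + L / 2 * ‖x - xk‖ ^ 2 + Lf / 2 * ‖x - xt‖ ^ 2 :=
  composite_model_step_general f g Lf L hf hfd hfL xt xk xplus hmin
end

section
/- Suppose f is μ-strongly convex, differentiable, with minimizer x*, and the Catalyst iteration produces x^{k+1} as an exact minimizer of x ↦ f(x) + (L/2)‖x − x^k‖₂². Then f(x^{k+1}) − f(x*) ≤ (L/(L+μ))·(f(x^k) − f(x*)). -/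
/-!
Compare the proximal point with the convex combination `z = a • xᵏ + b • x*`,
`a = L / (L + μ)`, `b = μ / (L + μ)`. Strong convexity bounds `f z` by `a f(xᵏ) + b f(x*)` minus
`a b (μ/2) ‖xᵏ - x*‖²`, while the proximal penalty at `z` is `(L/2) b² ‖xᵏ - x*‖²`; these two
quadratic terms are equal precisely because `L b = μ a`. Hence `f(xᵏ⁺¹) ≤ a f(xᵏ) + b f(x*)`.
-/

open Set

variable {E : Type*} [NormedAddCommGroup E] [NormedSpace ℝ E]

def IsProximalPoint (L : ℝ) (f : E → ℝ) (x p : E) : Prop :=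
  ∀ y, f p + L / 2 * ‖p - x‖ ^ 2 ≤ f y + L / 2 * ‖y - x‖ ^ 2

namespace IsProximalPoint

variable {L μ : ℝ} {f : E → ℝ} {x p : E}

theorem le_of_strongConvexOn (hp : IsProximalPoint L f x p) (hL : 0 ≤ L)
    (hf : StrongConvexOn univ μ f) (y : E) {t : ℝ} (ht₀ : 0 ≤ t) (ht₁ : t ≤ 1) :
    f p ≤ (1 - t) * f x + t * f y + t * (L * t - μ * (1 - t)) / 2 * ‖x - y‖ ^ 2 := by
  have hconv : f ((1 - t) • x + t • y) ≤
      (1 - t) * f x + t * f y - (1 - t) * t * (μ / 2 * ‖x - y‖ ^ 2) := by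
    simpa only [smul_eq_mul] using
      hf.2 (mem_univ x) (mem_univ y) (sub_nonneg.2 ht₁) ht₀ (sub_add_cancel 1 t)
  have hdist : ‖((1 - t) • x + t • y) - x‖ = t * ‖x - y‖ := by
    rw [show ((1 - t) • x + t • y) - x = t • (y - x) by module, norm_smul,
      Real.norm_of_nonneg ht₀, norm_sub_rev]
  have hprox := hp ((1 - t) • x + t • y)
  rw [hdist] at hprox
  nlinarith [show 0 ≤ L / 2 * ‖p - x‖ ^ 2 by positivity]

theorem le_convex_combination (hp : IsProximalPoint L f x p) (hL : 0 ≤ L) (hμ : 0 < μ)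
    (hf : StrongConvexOn univ μ f) (y : E) :
    f p ≤ L / (L + μ) * f x + μ / (L + μ) * f y := by
  have hLμ : 0 < L + μ := by linarith
  have h := hp.le_of_strongConvexOn hL hf y (t := μ / (L + μ)) (by positivity)
    ((div_le_one hLμ).2 (by linarith))
  have hbalance : L * (μ / (L + μ)) - μ * (1 - μ / (L + μ)) = 0 := by
    field_simp
    ring
  have hweight : 1 - μ / (L + μ) = L / (L + μ) := by
    field_simp
    ring
  rwa [hbalance, mul_zero, zero_div, zero_mul, add_zero, hweight] at h

end IsProximalPoint

theorem catalyst_outer_step_general {n : ℕ} (f : EuclideanSpace ℝ (Fin n) → ℝ)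
    (μ L : ℝ) (hμ : 0 < μ) (hL : 0 < L)
    (hf : StrongConvexOn Set.univ μ f)
    (xstar : EuclideanSpace ℝ (Fin n))
    (xk xk1 : EuclideanSpace ℝ (Fin n))
    (hprox : ∀ x, f xk1 + L / 2 * ‖xk1 - xk‖ ^ 2 ≤ f x + L / 2 * ‖x - xk‖ ^ 2) :
    f xk1 - f xstar ≤ L / (L + μ) * (f xk - f xstar) := by
  have h := IsProximalPoint.le_convex_combination hprox hL.le hμ hf xstar
  have hweights : L / (L + μ) + μ / (L + μ) = 1 := by
    rw [← add_div, div_self (by linarith)]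
  linear_combination h + f xstar * hweights

/-- Linear convergence of the exact proximal-point (Catalyst outer) step. -/
theorem catalyst_outer_step {n : ℕ} (f : EuclideanSpace ℝ (Fin n) → ℝ)
    (μ L : ℝ) (hμ : 0 < μ) (hL : 0 < L)
    (hf : StrongConvexOn Set.univ μ f) (hfd : Differentiable ℝ f)
    (xstar : EuclideanSpace ℝ (Fin n)) (hmin : ∀ y, f xstar ≤ f y)
    (xk xk1 : EuclideanSpace ℝ (Fin n))
    (hprox : ∀ x, f xk1 + L / 2 * ‖xk1 - xk‖ ^ 2 ≤ f x + L / 2 * ‖x - xk‖ ^ 2) :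
    f xk1 - f xstar ≤ L / (L + μ) * (f xk - f xstar) :=
  catalyst_outer_step_general f μ L hμ hL hf xstar xk xk1 hprox
end
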